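/- arXiv:1311.5049 — 7 statements merged into one kernel-verified Lean document; each statement's English description precedes it below -/
import Mathlib

section
/- A digraph X is ultrahomogeneous if and only if its enlargement X_e is ultrahomogeneous. -/
def enlarge {X : Type*} (ρ : X → X → Prop) (x y : X) : Prop :=
  ρ x y ∨ (x ≠ y ∧ ¬ ρ x y ∧ ¬ ρ y x)

def IsPartialIso {X : Type*} (ρ : X → X → Prop) (A : Set X) (f : X → X) : Prop :=
  A.Finite ∧ Set.InjOn f A ∧ ∀ a ∈ A, ∀ b ∈ A, (ρ a b ↔ ρ (f a) (f b))

def IsAuto {X : Type*} (ρ : X → X → Prop) (f : X → X) : Prop :=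
  Function.Bijective f ∧ ∀ a b : X, ρ a b ↔ ρ (f a) (f b)

def Ultrahomogeneous {X : Type*} (ρ : X → X → Prop) : Prop :=
  ∀ A f, IsPartialIso ρ A f → ∃ g, IsAuto ρ g ∧ Set.EqOn f g A

/-! Off the diagonal, `enlarge ρ a b` holds exactly when `ρ b a` fails, and on the diagonal it
coincides with `ρ`. Hence an injective map preserves `ρ` on a set iff it preserves `enlarge ρ`
there, so the two structures have the same finite partial isomorphisms and the same
automorphisms. -/

section Enlarge

variable {X : Type*} {ρ : X → X → Prop}

theorem enlarge_self (a : X) : enlarge ρ a a ↔ ρ a a := by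
  simp [enlarge]

theorem enlarge_iff_not_swap (hasym : ∀ x y : X, ρ x y → ¬ ρ y x) {a b : X} (hab : a ≠ b) :
    enlarge ρ a b ↔ ¬ ρ b a := by
  by_cases h : ρ a b
  · simp [enlarge, h, hasym a b h]
  · simp [enlarge, h, hab]

theorem Set.InjOn.preserves_enlarge_iff (hasym : ∀ x y : X, ρ x y → ¬ ρ y x) {A : Set X}
    {f : X → X} (hinj : Set.InjOn f A) :
    (∀ a ∈ A, ∀ b ∈ A, enlarge ρ a b ↔ enlarge ρ (f a) (f b)) ↔
      ∀ a ∈ A, ∀ b ∈ A, ρ a b ↔ ρ (f a) (f b) := by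
  constructor
  all_goals
    intro h a ha b hb
    rcases eq_or_ne a b with rfl | hab
    · simpa only [enlarge_self] using h a ha a ha
  · rw [← not_iff_not, ← enlarge_iff_not_swap hasym hab.symm,
      ← enlarge_iff_not_swap hasym (hinj.ne hb ha hab.symm), h b hb a ha]
  · rw [enlarge_iff_not_swap hasym hab, enlarge_iff_not_swap hasym (hinj.ne ha hb hab),
      h b hb a ha]

theorem isPartialIso_enlarge_iff (hasym : ∀ x y : X, ρ x y → ¬ ρ y x) {A : Set X}
    {f : X → X} : IsPartialIso (enlarge ρ) A f ↔ IsPartialIso ρ A f :=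
  and_congr_right fun _ => and_congr_right fun hinj => hinj.preserves_enlarge_iff hasym

theorem isAuto_enlarge_iff (hasym : ∀ x y : X, ρ x y → ¬ ρ y x) {g : X → X} :
    IsAuto (enlarge ρ) g ↔ IsAuto ρ g :=
  and_congr_right fun hbij => by
    simpa only [Set.mem_univ, forall_const] using
      (Set.injOn_univ.2 hbij.injective).preserves_enlarge_iff hasym

end Enlarge

theorem ultra_enlarge_general {X : Type*} (ρ : X → X → Prop)
    (hasym : ∀ x y : X, ρ x y → ¬ ρ y x) :
    Ultrahomogeneous ρ ↔ Ultrahomogeneous (enlarge ρ) := by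
  simp only [Ultrahomogeneous, isPartialIso_enlarge_iff hasym, isAuto_enlarge_iff hasym]

theorem ultra_enlarge {X : Type*} (ρ : X → X → Prop)
    (hirr : ∀ x : X, ¬ ρ x x) (hasym : ∀ x y : X, ρ x y → ¬ ρ y x) :
    Ultrahomogeneous ρ ↔ Ultrahomogeneous (enlarge ρ) :=
  ultra_enlarge_general ρ hasym
end

section
/- If an irreflexive disconnected binary structure X (with at least two connectivity components) is ultrahomogeneous, then all its connectivity components are pairwise isomorphic, each component is ultrahomogeneous, and each component is a complete structure (for all distinct x,y in a component, x ρ y or y ρ x). -/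
def component {X : Type*} (ρ : X → X → Prop) (x : X) : Set X :=
  {y | Relation.EqvGen ρ x y}

/-- The substructure of `⟨X,ρ⟩` on the set `S` is ultrahomogeneous: every finite
partial isomorphism inside `S` extends to an automorphism of the substructure on `S`. -/
def UltraOn {X : Type*} (ρ : X → X → Prop) (S : Set X) : Prop :=
  ∀ A f, A ⊆ S → Set.MapsTo f A S → IsPartialIso ρ A f →
    ∃ g : X → X, Set.BijOn g S S ∧ (∀ a ∈ S, ∀ b ∈ S, (ρ a b ↔ ρ (g a) (g b))) ∧
      Set.EqOn f g A

/-! An automorphism permutes the connectivity components, sending the component of `x` onto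
that of its image. Ultrahomogeneity applied to the one-point map `x ↦ y` (a partial isomorphism
because `ρ` is irreflexive) therefore gives an automorphism carrying the component of `x` onto
that of `y`, and applied to a partial isomorphism with domain inside one component it gives an
automorphism preserving that component. Finally, if `a ≠ b` were unrelated points of one
component, the map `a ↦ a, b ↦ c`, with `c` in another component, would be a partial
isomorphism, and its extension would move `b` out of the component of `a`. -/

open Relation

section

variable {X : Type*} {ρ : X → X → Prop}

lemma Relation.EqvGen.map_of_rel {g : X → X} (hg : ∀ u v, ρ u v → ρ (g u) (g v)) {a b : X}
    (h : EqvGen ρ a b) : EqvGen ρ (g a) (g b) := by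
  induction h with
  | rel u v h => exact .rel _ _ (hg u v h)
  | refl u => exact .refl _
  | symm u v _ ih => exact .symm _ _ ih
  | trans u v w _ _ ih₁ ih₂ => exact .trans _ _ _ ih₁ ih₂

lemma component_eq_of_eqvGen {x y : X} (h : EqvGen ρ x y) : component ρ x = component ρ y := by
  ext z
  exact ⟨(EqvGen.symm _ _ h).trans _ _ _, h.trans _ _ _⟩

lemma IsAuto.eqvGen_iff {g : X → X} (hg : IsAuto ρ g) {a b : X} :
    EqvGen ρ (g a) (g b) ↔ EqvGen ρ a b := by
  refine ⟨fun h => ?_, EqvGen.map_of_rel fun u v => (hg.2 u v).1⟩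
  have hinv : ∀ u v, ρ u v → ρ (Function.surjInv hg.1.2 u) (Function.surjInv hg.1.2 v) :=
    fun u v huv => (hg.2 _ _).2 (by simpa only [Function.surjInv_eq] using huv)
  simpa only [Function.leftInverse_surjInv hg.1 _] using EqvGen.map_of_rel hinv h

lemma IsAuto.bijOn_component {g : X → X} (hg : IsAuto ρ g) (x : X) :
    Set.BijOn g (component ρ x) (component ρ (g x)) := by
  refine ⟨fun a ha => hg.eqvGen_iff.2 ha, hg.1.1.injOn, fun z hz => ?_⟩
  obtain ⟨w, rfl⟩ := hg.1.2 z
  exact ⟨w, hg.eqvGen_iff.1 hz, rfl⟩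

lemma isPartialIso_of_forall_not_rel {A : Set X} {f : X → X} (hA : A.Finite)
    (hf : Set.InjOn f A) (hρA : ∀ p ∈ A, ∀ q ∈ A, ¬ ρ p q)
    (hρfA : ∀ p ∈ A, ∀ q ∈ A, ¬ ρ (f p) (f q)) : IsPartialIso ρ A f :=
  ⟨hA, hf, fun p hp q hq => iff_of_false (hρA p hp q hq) (hρfA p hp q hq)⟩

lemma exists_not_eqvGen_of_disconnected (hdisc : ∃ x y : X, ¬ EqvGen ρ x y) (a : X) :
    ∃ c, ¬ EqvGen ρ a c := by
  obtain ⟨x, y, hxy⟩ := hdisc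
  by_contra! h
  exact hxy ((EqvGen.symm _ _ (h x)).trans _ _ _ (h y))

namespace Ultrahomogeneous

lemma exists_iso_components (hirr : ∀ x : X, ¬ ρ x x) (hultra : Ultrahomogeneous ρ) (x y : X) :
    ∃ f : X → X, Set.BijOn f (component ρ x) (component ρ y) ∧
      ∀ a ∈ component ρ x, ∀ b ∈ component ρ x, (ρ a b ↔ ρ (f a) (f b)) := by
  have hpi : IsPartialIso ρ {x} (fun _ => y) :=
    isPartialIso_of_forall_not_rel (Set.finite_singleton x) (Set.injOn_singleton _ x)
      (by simpa using hirr x) (by simpa using hirr y)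
  obtain ⟨g, hg, hgx⟩ := hultra _ _ hpi
  refine ⟨g, ?_, fun a _ b _ => hg.2 a b⟩
  simpa only [← hgx (Set.mem_singleton x)] using hg.bijOn_component x

lemma ultraOn_component (hultra : Ultrahomogeneous ρ) (x : X) :
    UltraOn ρ (component ρ x) := by
  intro A f hA hfA hpi
  rcases A.eq_empty_or_nonempty with rfl | ⟨a, ha⟩
  · exact ⟨id, Set.bijOn_id _, fun _ _ _ _ => Iff.rfl, Set.eqOn_empty _ _⟩
  obtain ⟨g, hg, hfg⟩ := hultra _ _ hpi
  refine ⟨g, ?_, fun a _ b _ => hg.2 a b, hfg⟩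
  have hsrc : component ρ x = component ρ a := component_eq_of_eqvGen (hA ha)
  have htgt : component ρ (g a) = component ρ x := by
    rw [← hfg ha]
    exact (component_eq_of_eqvGen (hfA ha)).symm
  simpa only [← hsrc, htgt] using hg.bijOn_component a

lemma rel_or_rel_of_mem_component (hirr : ∀ x : X, ¬ ρ x x)
    (hdisc : ∃ x y : X, ¬ EqvGen ρ x y) (hultra : Ultrahomogeneous ρ) (x : X)
    {a b : X} (ha : a ∈ component ρ x) (hb : b ∈ component ρ x) (hab : a ≠ b) :
    ρ a b ∨ ρ b a := by
  by_contra! hnab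
  obtain ⟨c, hc⟩ := exists_not_eqvGen_of_disconnected hdisc a
  have hac : a ≠ c := fun h => hc (h ▸ EqvGen.refl a)
  have hnac : ¬ ρ a c ∧ ¬ ρ c a :=
    ⟨fun h => hc (.rel _ _ h), fun h => hc (.symm _ _ (.rel _ _ h))⟩
  classical
  let f : X → X := fun z => if z = b then c else a
  have hfa : f a = a := if_neg hab
  have hfb : f b = c := if_pos rfl
  have hpi : IsPartialIso ρ {a, b} f := by
    refine isPartialIso_of_forall_not_rel (Set.toFinite _) ?_ ?_ ?_
    · rintro p (rfl | rfl) q (rfl | rfl) hpq <;> simp_all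
    · rintro p (rfl | rfl) q (rfl | rfl) <;> simp_all
    · rintro p (rfl | rfl) q (rfl | rfl) <;> simp_all
  obtain ⟨g, hg, hfg⟩ := hultra _ _ hpi
  have hgab : EqvGen ρ (g a) (g b) :=
    hg.eqvGen_iff.2 ((EqvGen.symm _ _ ha).trans _ _ _ hb)
  rw [← hfg (by simp), ← hfg (by simp), hfa, hfb] at hgab
  exact hc hgab

end Ultrahomogeneous

end

theorem ultra_disconnected_components {X : Type*} (ρ : X → X → Prop)
    (hirr : ∀ x : X, ¬ ρ x x)
    (hdisc : ∃ x y : X, ¬ Relation.EqvGen ρ x y)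
    (hultra : Ultrahomogeneous ρ) :
    (∀ x y : X, ∃ f : X → X, Set.BijOn f (component ρ x) (component ρ y) ∧
        ∀ a ∈ component ρ x, ∀ b ∈ component ρ x, (ρ a b ↔ ρ (f a) (f b))) ∧
    (∀ x : X, UltraOn ρ (component ρ x)) ∧
    (∀ x : X, ∀ a ∈ component ρ x, ∀ b ∈ component ρ x, a ≠ b → ρ a b ∨ ρ b a) :=
  ⟨hultra.exists_iso_components hirr, hultra.ultraOn_component,
    fun x _ ha _ hb hab => hultra.rel_or_rel_of_mem_component hirr hdisc x ha hb hab⟩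
end

section
/- Let X be the disjoint union of irreflexive connected binary structures X_i (i ∈ I, |I| > 1) which are pairwise isomorphic, each ultrahomogeneous, and each complete. Then X is ultrahomogeneous. -/
open Set Function

section

variable {X Y I : Type*} {ρ : X → X → Prop}

def IsIsoOn (ρ : X → X → Prop) (S T : Set X) (g : X → X) : Prop :=
  BijOn g S T ∧ ∀ a ∈ S, ∀ b ∈ S, (ρ a b ↔ ρ (g a) (g b))

theorem IsPartialIso.mono {A B : Set X} {f : X → X} (hf : IsPartialIso ρ A f) (hBA : B ⊆ A) :
    IsPartialIso ρ B f :=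
  ⟨hf.1.subset hBA, hf.2.1.mono hBA, fun a ha b hb => hf.2.2 a (hBA ha) b (hBA hb)⟩

theorem IsPartialIso.eq_or_rel_iff {A : Set X} {f : X → X} (hf : IsPartialIso ρ A f)
    {a b : X} (ha : a ∈ A) (hb : b ∈ A) :
    (a = b ∨ ρ a b ∨ ρ b a) ↔ (f a = f b ∨ ρ (f a) (f b) ∨ ρ (f b) (f a)) := by
  rw [hf.2.1.eq_iff ha hb, hf.2.2 a ha b hb, hf.2.2 b hb a ha]

theorem eq_iff_eq_or_rel {p : X → I} (hrel : ∀ a b, ρ a b → p a = p b)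
    (hcomplete : ∀ a b, p a = p b → a ≠ b → ρ a b ∨ ρ b a) {a b : X} :
    p a = p b ↔ (a = b ∨ ρ a b ∨ ρ b a) := by
  refine ⟨fun h => or_iff_not_imp_left.2 (hcomplete a b h), ?_⟩
  rintro (rfl | h | h)
  exacts [rfl, hrel a b h, (hrel b a h).symm]

theorem IsPartialIso.apply_eq_iff {p : X → I} (hrel : ∀ a b, ρ a b → p a = p b)
    (hcomplete : ∀ a b, p a = p b → a ≠ b → ρ a b ∨ ρ b a) {A : Set X} {f : X → X}
    (hf : IsPartialIso ρ A f) {a b : X} (ha : a ∈ A) (hb : b ∈ A) :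
    p a = p b ↔ p (f a) = p (f b) := by
  rw [eq_iff_eq_or_rel hrel hcomplete, eq_iff_eq_or_rel hrel hcomplete, hf.eq_or_rel_iff ha hb]

theorem exists_perm_apply_eq {A : Set X} (hA : A.Finite) {f : X → Y} {p : X → I} {q : Y → I}
    (h : ∀ a ∈ A, ∀ b ∈ A, p a = p b ↔ q (f a) = q (f b)) :
    ∃ σ : Equiv.Perm I, ∀ a ∈ A, σ (p a) = q (f a) := by
  have : Finite A := hA.to_subtype
  let s := rangeSplitting (A.domRestrict p)
  have hs : ∀ i, p (s i) = i := apply_rangeSplitting _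
  have hinj : Injective fun i => q (f (s i)) := fun i j hij =>
    Subtype.ext <| by rwa [← hs i, ← hs j, h _ (s i).2 _ (s j).2]
  obtain ⟨σ, hσ⟩ := Equiv.Perm.exists_extending_pair _ _ Subtype.val_injective hinj
  refine ⟨σ, fun a ha => ?_⟩
  have hsa : p (s ⟨p a, ⟨a, ha⟩, rfl⟩) = p a := hs _
  exact (hσ ⟨p a, ⟨a, ha⟩, rfl⟩).trans ((h _ (s _).2 a ha).1 hsa)

theorem UltraOn.exists_isIsoOn_eqOn {S T A : Set X} {f : X → X} (hT : UltraOn ρ T)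
    (hST : ∃ h, IsIsoOn ρ S T h) (hAS : A ⊆ S) (hfA : MapsTo f A T) (hf : IsPartialIso ρ A f) :
    ∃ g, IsIsoOn ρ S T g ∧ EqOn f g A := by
  obtain ⟨h, hbij, hρ⟩ := hST
  cases isEmpty_or_nonempty X
  · exact ⟨h, ⟨hbij, hρ⟩, fun x => isEmptyElim x⟩
  have hinv : ∀ a ∈ A, invFunOn h S (h a) = a := fun a ha =>
    hbij.injOn.leftInvOn_invFunOn (hAS ha)
  have hF : IsPartialIso ρ (h '' A) (f ∘ invFunOn h S) := by
    refine ⟨hf.1.image h, ?_, ?_⟩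
    · rintro _ ⟨a, ha, rfl⟩ _ ⟨b, hb, rfl⟩ hab
      simp only [comp_apply, hinv a ha, hinv b hb] at hab
      rw [hf.2.1 ha hb hab]
    · rintro _ ⟨a, ha, rfl⟩ _ ⟨b, hb, rfl⟩
      simp only [comp_apply, hinv a ha, hinv b hb]
      exact (hρ a (hAS ha) b (hAS hb)).symm.trans (hf.2.2 a ha b hb)
  have hFmaps : MapsTo (f ∘ invFunOn h S) (h '' A) T := by
    rintro _ ⟨a, ha, rfl⟩
    simpa only [comp_apply, hinv a ha] using hfA ha
  obtain ⟨g, hg, hgρ, hFg⟩ :=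
    hT _ _ (image_subset_iff.2 fun a ha => hbij.mapsTo (hAS ha)) hFmaps hF
  refine ⟨g ∘ h, ⟨hg.comp hbij, fun a ha b hb => ?_⟩, fun a ha => ?_⟩
  · exact (hρ a ha b hb).trans (hgρ _ (hbij.mapsTo ha) _ (hbij.mapsTo hb))
  · simpa only [comp_apply, hinv a ha] using hFg (mem_image_of_mem h ha)

theorem isAuto_of_isIsoOn_fiber {p : X → I} (hrel : ∀ a b, ρ a b → p a = p b)
    (σ : Equiv.Perm I) {G : I → X → X} (hG : ∀ i, IsIsoOn ρ (p ⁻¹' {i}) (p ⁻¹' {σ i}) (G i)) :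
    IsAuto ρ fun x => G (p x) x := by
  have hp : ∀ x, p (G (p x) x) = σ (p x) := fun x => (hG (p x)).1.mapsTo rfl
  refine ⟨⟨fun x y hxy => ?_, fun y => ?_⟩, fun a b => ?_⟩
  · have hxy' : p x = p y := σ.injective <| by rw [← hp, ← hp]; exact congrArg p hxy
    simp only [hxy'] at hxy
    exact (hG (p y)).1.injOn hxy' rfl hxy
  · obtain ⟨x, hx, hxy⟩ := (hG (σ.symm (p y))).1.surjOn (σ.apply_symm_apply (p y)).symm
    exact ⟨x, show G (p x) x = y by rwa [show p x = σ.symm (p y) from hx]⟩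
  · by_cases hab : p a = p b
    · simp only [hab]
      exact (hG (p b)).2 a hab b rfl
    · refine iff_of_false (fun h => hab (hrel a b h)) fun h => hab (σ.injective ?_)
      rw [← hp, ← hp, hrel _ _ h]

theorem exists_eq_preimage_singleton {S : I → Set X} (hS : ∀ x, ∃! i, x ∈ S i) :
    ∃ p : X → I, S = fun i => p ⁻¹' {i} := by
  choose p hp huniq using hS
  refine ⟨p, funext fun i => ext fun x => ⟨fun h => (huniq x i h).symm, ?_⟩⟩
  rintro rfl
  exact hp x

end

theorem union_ultrahomogeneous_general {X I : Type*} (ρ : X → X → Prop) (S : I → Set X)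
    (hcover : ∀ x : X, ∃! i, x ∈ S i)
    (hrel : ∀ a b : X, ρ a b → ∃ i, a ∈ S i ∧ b ∈ S i)
    (hiso : ∀ i j, ∃ f : X → X, Set.BijOn f (S i) (S j) ∧
        ∀ a ∈ S i, ∀ b ∈ S i, (ρ a b ↔ ρ (f a) (f b)))
    (hultra : ∀ i, UltraOn ρ (S i))
    (hcomplete : ∀ i, ∀ a ∈ S i, ∀ b ∈ S i, a ≠ b → ρ a b ∨ ρ b a) :
    Ultrahomogeneous ρ := by
  obtain ⟨p, rfl⟩ := exists_eq_preimage_singleton hcover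
  have hrel' : ∀ a b, ρ a b → p a = p b := fun a b hab => by
    obtain ⟨i, hai, hbi⟩ := hrel a b hab
    exact hai.trans hbi.symm
  have hcomplete' : ∀ a b, p a = p b → a ≠ b → ρ a b ∨ ρ b a := fun a b hab =>
    hcomplete (p b) a hab b rfl
  intro A f hf
  obtain ⟨σ, hσ⟩ := exists_perm_apply_eq hf.1 fun a ha b hb =>
    hf.apply_eq_iff hrel' hcomplete' ha hb
  have hext : ∀ i, ∃ g, IsIsoOn ρ (p ⁻¹' {i}) (p ⁻¹' {σ i}) g ∧ EqOn f g (A ∩ p ⁻¹' {i}) :=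
    fun i => (hultra (σ i)).exists_isIsoOn_eqOn (hiso i (σ i)) inter_subset_right
      (fun a ha => (hσ a ha.1).symm.trans (congrArg σ ha.2)) (hf.mono inter_subset_left)
  choose G hG hfG using hext
  exact ⟨_, isAuto_of_isIsoOn_fiber hrel' σ hG, fun a ha => hfG (p a) ⟨ha, rfl⟩⟩

/-- If `X` is the disjoint union (partition `S`) of more than one nonempty,
irreflexive, connected, pairwise isomorphic, ultrahomogeneous and complete binary
structures, then `X` is ultrahomogeneous. -/
theorem union_ultrahomogeneous {X I : Type*} (ρ : X → X → Prop) (S : I → Set X)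
    (hcover : ∀ x : X, ∃! i, x ∈ S i)
    (hne : ∀ i, (S i).Nonempty)
    (hrel : ∀ a b : X, ρ a b → ∃ i, a ∈ S i ∧ b ∈ S i)
    (hirr : ∀ x : X, ¬ ρ x x)
    (hconn : ∀ i, ∀ a ∈ S i, ∀ b ∈ S i, Relation.EqvGen ρ a b)
    (hmany : ∃ i j : I, i ≠ j)
    (hiso : ∀ i j, ∃ f : X → X, Set.BijOn f (S i) (S j) ∧
        ∀ a ∈ S i, ∀ b ∈ S i, (ρ a b ↔ ρ (f a) (f b)))
    (hultra : ∀ i, UltraOn ρ (S i))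
    (hcomplete : ∀ i, ∀ a ∈ S i, ∀ b ∈ S i, a ≠ b → ρ a b ∨ ρ b a) :
    Ultrahomogeneous ρ :=
  union_ultrahomogeneous_general ρ S hcover hrel hiso hultra hcomplete
end

section
/- If X = ⟨X,ρ⟩ is an irreflexive, ultrahomogeneous, complete binary structure, and → is the relation defined by x → y ⟺ x ρ y ∧ ¬ y ρ x, then Y = ⟨X,→⟩ is an ultrahomogeneous digraph and X equals the enlargement Y_e of Y. -/
/-! For an irreflexive complete relation `ρ`, `ρ a b` holds exactly when `a ≠ b` and there is no
arrow `b → a` of its asymmetric part. Hence a partial map which is injective and preserves arrows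
also preserves `ρ`, so it extends to an automorphism of `ρ`, which in turn preserves arrows. The
same description of `ρ` says that `ρ` is the enlargement of its asymmetric part. -/

section AsymmPart

variable {X : Type*} {ρ : X → X → Prop}

def asymmPart (ρ : X → X → Prop) (x y : X) : Prop :=
  ρ x y ∧ ¬ ρ y x

theorem asymmPart_irrefl (x : X) : ¬ asymmPart ρ x x :=
  fun h => h.2 h.1

theorem asymmPart_asymm {x y : X} (h : asymmPart ρ x y) : ¬ asymmPart ρ y x :=
  fun h' => h.2 h'.1

theorem enlarge_asymmPart_iff {x y : X} :
    enlarge (asymmPart ρ) x y ↔ x ≠ y ∧ ¬ asymmPart ρ y x := by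
  constructor
  · rintro (h | ⟨hne, -, h⟩)
    · exact ⟨by rintro rfl; exact asymmPart_irrefl x h, asymmPart_asymm h⟩
    · exact ⟨hne, h⟩
  · rintro ⟨hne, h⟩
    by_cases hxy : asymmPart ρ x y
    · exact Or.inl hxy
    · exact Or.inr ⟨hne, hxy, h⟩

theorem iff_ne_and_not_asymmPart (hirr : ∀ x, ¬ ρ x x) (hcomplete : ∀ x y, x ≠ y → ρ x y ∨ ρ y x)
    (x y : X) : ρ x y ↔ x ≠ y ∧ ¬ asymmPart ρ y x := by
  constructor
  · exact fun h => ⟨fun he => hirr x (he ▸ h), fun h' => h'.2 h⟩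
  · rintro ⟨hne, h⟩
    by_contra hxy
    exact h ⟨(hcomplete x y hne).resolve_left hxy, hxy⟩

theorem iff_enlarge_asymmPart (hirr : ∀ x, ¬ ρ x x) (hcomplete : ∀ x y, x ≠ y → ρ x y ∨ ρ y x)
    (x y : X) : ρ x y ↔ enlarge (asymmPart ρ) x y :=
  (iff_ne_and_not_asymmPart hirr hcomplete x y).trans enlarge_asymmPart_iff.symm

theorem IsPartialIso.of_asymmPart (hρ : ∀ x y, ρ x y ↔ x ≠ y ∧ ¬ asymmPart ρ y x)
    {A : Set X} {f : X → X} (hf : IsPartialIso (asymmPart ρ) A f) : IsPartialIso ρ A f := by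
  obtain ⟨hfin, hinj, hpres⟩ := hf
  refine ⟨hfin, hinj, fun a ha b hb => ?_⟩
  rw [hρ, hρ, hinj.ne_iff ha hb, hpres b hb a ha]

theorem IsAuto.asymmPart {g : X → X} (hg : IsAuto ρ g) : IsAuto (asymmPart ρ) g :=
  ⟨hg.1, fun a b => and_congr (hg.2 a b) (not_congr (hg.2 b a))⟩

theorem Ultrahomogeneous.asymmPart (hρ : ∀ x y, ρ x y ↔ x ≠ y ∧ ¬ asymmPart ρ y x)
    (hultra : Ultrahomogeneous ρ) : Ultrahomogeneous (asymmPart ρ) := by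
  intro A f hf
  obtain ⟨g, hg, hfg⟩ := hultra A f (hf.of_asymmPart hρ)
  exact ⟨g, hg.asymmPart, hfg⟩

end AsymmPart

theorem ultra_complete_is_enlarged_digraph {X : Type*} (ρ : X → X → Prop)
    (hirr : ∀ x : X, ¬ ρ x x)
    (hcomplete : ∀ x y : X, x ≠ y → ρ x y ∨ ρ y x)
    (hultra : Ultrahomogeneous ρ) :
    (∀ x : X, ¬ (fun x y => ρ x y ∧ ¬ ρ y x) x x) ∧
    (∀ x y : X, (ρ x y ∧ ¬ ρ y x) → ¬ (ρ y x ∧ ¬ ρ x y)) ∧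
    Ultrahomogeneous (fun x y => ρ x y ∧ ¬ ρ y x) ∧
    (∀ x y : X, ρ x y ↔ enlarge (fun x y => ρ x y ∧ ¬ ρ y x) x y) :=
  ⟨asymmPart_irrefl, fun _ _ => asymmPart_asymm,
    hultra.asymmPart (iff_ne_and_not_asymmPart hirr hcomplete),
    iff_enlarge_asymmPart hirr hcomplete⟩
end

section
/- Let κ be a cardinal and X = ⋃_{α<κ} X_α a disjoint union of pairwise isomorphic strongly connected binary structures. Then a set C is in P(X) if and only if C = ⋃_{α∈A} g(α) for some A ∈ [κ]^κ and some function g with g(α) ∈ P(X_α) for each α ∈ A. -/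
/-- Copies of the substructure on `S`: subsets of `S` carrying a substructure
isomorphic to the substructure on `S`. -/
def copiesIn {X : Type*} (ρ : X → X → Prop) (S : Set X) : Set (Set X) :=
  {B | B ⊆ S ∧ ∃ f : X → X, Set.BijOn f S B ∧
    ∀ a ∈ S, ∀ b ∈ S, (ρ a b ↔ ρ (f a) (f b))}

/-- The set of copies of the whole structure: images of self-embeddings. -/
def PX {X : Type*} (ρ : X → X → Prop) : Set (Set X) :=
  {C | ∃ f : X → X, Function.Injective f ∧
    (∀ a b : X, ρ a b ↔ ρ (f a) (f b)) ∧ C = Set.range f}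

/-- The substructure on `S` is strongly connected: connected, and any two of its
copies contain points related by `Δ ∪ ρ ∪ ρ⁻¹`. -/
def StronglyConnectedOn {X : Type*} (ρ : X → X → Prop) (S : Set X) : Prop :=
  (∀ a ∈ S, ∀ b ∈ S, Relation.EqvGen ρ a b) ∧
  ∀ A ∈ copiesIn ρ S, ∀ B ∈ copiesIn ρ S,
    ∃ a ∈ A, ∃ b ∈ B, a = b ∨ ρ a b ∨ ρ b a

/-!
A self-embedding `f` of `X` maps each connected piece `S i` into a single piece `S (σ i)`,
and `f '' S i` is a copy of `S (σ i)` because all pieces are isomorphic. If `σ i = σ k`, then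
`f '' S i` and `f '' S k` are two copies of the same strongly connected piece, so they contain
equal or related points; as `f` reflects `ρ` and pieces are unrelated to each other, `i = k`.
Hence `σ` is injective and `range f` is a union of copies over the full-size index set
`range σ`. Conversely, given such a union indexed by `A ≃ ι`, the isomorphisms
`S i ≃ S (e i) ≃ g (e i)` glue to a self-embedding, since distinct pieces go to distinct
pieces.
-/

open Set Function Relation

theorem Relation.EqvGen.map {α β : Type*} {r : α → α → Prop} {s : β → β → Prop}
    {f : α → β} (hf : ∀ a b, r a b → s (f a) (f b)) {a b : α} (h : EqvGen r a b) :
    EqvGen s (f a) (f b) := by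
  induction h with
  | rel a b hab => exact .rel _ _ (hf a b hab)
  | refl a => exact .refl _
  | symm a b _ ih => exact .symm _ _ ih
  | trans a b c _ _ ih₁ ih₂ => exact .trans _ _ _ ih₁ ih₂

theorem image_mem_copiesIn {X : Type*} {ρ : X → X → Prop} {T U : Set X} {f : X → X}
    (hinj : InjOn f T) (hf : ∀ a ∈ T, ∀ b ∈ T, (ρ a b ↔ ρ (f a) (f b)))
    (hsub : f '' T ⊆ U)
    (hiso : ∃ h : X → X, BijOn h U T ∧ ∀ a ∈ U, ∀ b ∈ U, (ρ a b ↔ ρ (h a) (h b))) :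
    f '' T ∈ copiesIn ρ U := by
  obtain ⟨h, hbij, hh⟩ := hiso
  exact ⟨hsub, f ∘ h, hinj.bijOn_image.comp hbij,
    fun a ha b hb => (hh a ha b hb).trans (hf _ (hbij.mapsTo ha) _ (hbij.mapsTo hb))⟩

section Partition

variable {X ι : Type*} {ρ : X → X → Prop} {S : ι → Set X} {p : X → ι}
  (hp : ∀ x i, p x = i ↔ x ∈ S i) (hρp : ∀ a b, ρ a b → p a = p b)
include hp hρp

theorem image_subset_of_eqvGen {f : X → X} (hf : ∀ a b, ρ a b → ρ (f a) (f b))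
    {T : Set X} {x₀ : X} (hx₀ : x₀ ∈ T) (hconn : ∀ a ∈ T, ∀ b ∈ T, EqvGen ρ a b) :
    f '' T ⊆ S (p (f x₀)) := by
  rintro _ ⟨x, hx, rfl⟩
  have hpx : p (f x₀) = p (f x) :=
    (Equivalence.eqvGen_iff eq_equivalence).1 (((hconn x₀ hx₀ x hx).map hf).map hρp)
  exact (hp _ _).1 hpx.symm

theorem eq_of_image_mem_copiesIn {f : X → X} (hinj : Injective f)
    (hf : ∀ a b, ρ (f a) (f b) → ρ a b) {U : Set X} (hU : StronglyConnectedOn ρ U)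
    {i k : ι} (hi : f '' S i ∈ copiesIn ρ U) (hk : f '' S k ∈ copiesIn ρ U) : i = k := by
  obtain ⟨_, ⟨x, hx, rfl⟩, _, ⟨y, hy, rfl⟩, hxy⟩ := hU.2 _ hi _ hk
  have hpxy : p x = p y := by
    rcases hxy with h | h | h
    · rw [hinj h]
    · exact hρp x y (hf x y h)
    · exact (hρp y x (hf y x h)).symm
  rwa [(hp x i).2 hx, (hp y k).2 hy] at hpxy

theorem iUnion_image_mem_PX {σ : ι → ι} (hσ : Injective σ) (h : ι → X → X)
    (hinj : ∀ i, InjOn (h i) (S i)) (hmaps : ∀ i, MapsTo (h i) (S i) (S (σ i)))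
    (hiso : ∀ i, ∀ a ∈ S i, ∀ b ∈ S i, (ρ a b ↔ ρ (h i a) (h i b))) :
    (⋃ i, h i '' S i) ∈ PX ρ := by
  have hmem : ∀ x, x ∈ S (p x) := fun x => (hp x _).1 rfl
  have hF : ∀ {x i}, x ∈ S i → h (p x) x = h i x := fun hx => by rw [(hp _ _).2 hx]
  have hpF : ∀ x, p (h (p x) x) = σ (p x) := fun x => (hp _ _).2 (hmaps _ (hmem x))
  refine ⟨fun x => h (p x) x, fun a b hab => ?_, fun a b => ?_, ?_⟩
  · have hpab : p a = p b := hσ (by rw [← hpF a, ← hpF b]; exact congrArg p hab)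
    have hb : b ∈ S (p a) := hpab ▸ hmem b
    exact hinj (p a) (hmem a) hb (by simpa only [hF hb] using hab)
  · by_cases hpab : p a = p b
    · have hb : b ∈ S (p a) := hpab ▸ hmem b
      simpa only [hF hb] using hiso (p a) a (hmem a) b hb
    · refine iff_of_false (fun hab => hpab (hρp a b hab)) (fun hab => hσ.ne hpab ?_)
      rw [← hpF a, ← hpF b]
      exact hρp _ _ hab
  · ext y
    simp only [mem_iUnion, mem_image, mem_range]
    constructor
    · rintro ⟨i, x, hx, rfl⟩
      exact ⟨x, hF hx⟩
    · rintro ⟨x, rfl⟩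
      exact ⟨p x, x, hmem x, rfl⟩

theorem exists_injective_copies_of_mem_PX (hne : ∀ i, (S i).Nonempty)
    (hsc : ∀ i, StronglyConnectedOn ρ (S i))
    (hiso : ∀ i j, ∃ f : X → X, BijOn f (S i) (S j) ∧
      ∀ a ∈ S i, ∀ b ∈ S i, (ρ a b ↔ ρ (f a) (f b)))
    {C : Set X} (hC : C ∈ PX ρ) :
    ∃ σ : ι → ι, Injective σ ∧
      ∃ T : ι → Set X, (∀ i, T i ∈ copiesIn ρ (S (σ i))) ∧ C = ⋃ i, T i := by
  obtain ⟨f, hinj, hf, rfl⟩ := hC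
  choose x₀ hx₀ using hne
  have hcopy : ∀ i, f '' S i ∈ copiesIn ρ (S (p (f (x₀ i)))) := fun i =>
    image_mem_copiesIn hinj.injOn (fun a _ b _ => hf a b)
      (image_subset_of_eqvGen hp hρp (fun a b => (hf a b).1) (hx₀ i) (hsc i).1) (hiso _ i)
  refine ⟨fun i => p (f (x₀ i)), fun i k (hik : p (f (x₀ i)) = p (f (x₀ k))) => ?_,
    fun i => f '' S i, hcopy, ?_⟩
  · exact eq_of_image_mem_copiesIn hp hρp hinj (fun a b => (hf a b).2) (hsc _) (hcopy i)
      (hik ▸ hcopy k)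
  · rw [← image_iUnion, eq_univ_of_forall fun x => mem_iUnion.2 ⟨p x, (hp x _).1 rfl⟩,
      image_univ]

theorem iUnion_mem_PX_of_mem_copiesIn
    (hiso : ∀ i j, ∃ f : X → X, BijOn f (S i) (S j) ∧
      ∀ a ∈ S i, ∀ b ∈ S i, (ρ a b ↔ ρ (f a) (f b)))
    {σ : ι → ι} (hσ : Injective σ) {T : ι → Set X}
    (hT : ∀ i, T i ∈ copiesIn ρ (S (σ i))) :
    ⋃ i, T i ∈ PX ρ := by
  choose hsub φ hφ hφρ using hT
  choose ψ hψ hψρ using fun i => hiso i (σ i)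
  have hbij : ∀ i, BijOn (φ i ∘ ψ i) (S i) (T i) := fun i => (hφ i).comp (hψ i)
  simp only [← fun i => (hbij i).image_eq]
  exact iUnion_image_mem_PX hp hρp hσ _ (fun i => (hbij i).injOn)
    (fun i => (hbij i).mapsTo.mono_right (hsub i))
    fun i a ha b hb =>
      (hψρ i a ha b hb).trans (hφρ i _ ((hψ i).mapsTo ha) _ ((hψ i).mapsTo hb))

end Partition

/-- Fact 2.2: a set `C` is a copy of the disjoint union `X` of `κ`-many pairwise
isomorphic strongly connected structures iff it is a union of copies of the
pieces indexed by a set of full cardinality. -/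
theorem copies_of_union {X ι : Type*} (ρ : X → X → Prop) (S : ι → Set X)
    (hcover : ∀ x : X, ∃! i, x ∈ S i)
    (hne : ∀ i, (S i).Nonempty)
    (hrel : ∀ a b : X, ρ a b → ∃ i, a ∈ S i ∧ b ∈ S i)
    (hsc : ∀ i, StronglyConnectedOn ρ (S i))
    (hiso : ∀ i j, ∃ f : X → X, Set.BijOn f (S i) (S j) ∧
        ∀ a ∈ S i, ∀ b ∈ S i, (ρ a b ↔ ρ (f a) (f b))) :
    ∀ C : Set X, C ∈ PX ρ ↔
      ∃ A : Set ι, Cardinal.mk A = Cardinal.mk ι ∧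
        ∃ g : ι → Set X, (∀ i ∈ A, g i ∈ copiesIn ρ (S i)) ∧ C = ⋃ i ∈ A, g i := by
  choose p hp_mem hp_unique using hcover
  have hp : ∀ x i, p x = i ↔ x ∈ S i :=
    fun x i => ⟨fun h => h ▸ hp_mem x, fun h => (hp_unique x i h).symm⟩
  have hρp : ∀ a b, ρ a b → p a = p b := fun a b hab => by
    obtain ⟨i, ha, hb⟩ := hrel a b hab
    rw [(hp a i).2 ha, (hp b i).2 hb]
  intro C
  constructor
  · intro hC
    obtain ⟨σ, hσ, T, hT, rfl⟩ := exists_injective_copies_of_mem_PX hp hρp hne hsc hiso hC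
    refine ⟨range σ, Cardinal.mk_range_eq σ hσ, extend σ T fun _ => ∅, ?_, ?_⟩
    · rintro _ ⟨i, rfl⟩
      rw [hσ.extend_apply]
      exact hT i
    · simp only [biUnion_range, hσ.extend_apply]
  · rintro ⟨A, hA, g, hg, rfl⟩
    obtain ⟨e⟩ : Nonempty (ι ≃ A) := Cardinal.eq.1 hA.symm
    rw [biUnion_eq_iUnion, ← e.surjective.iUnion_comp]
    exact iUnion_mem_PX_of_mem_copiesIn hp hρp hiso (Subtype.val_injective.comp e.injective)
      fun i => hg _ (e i).2
end

section
/- If X = ⋃_{α<κ} X_α (κ an infinite cardinal) is a disjoint union of pairwise isomorphic strongly connected binary structures, then the poset ⟨P(X), ⊆⟩ is atomless: every element has two incompatible elements below it (in fact, any two disjoint unions of κ-many whole components are incompatible below any given copy). -/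
open Set Function

section

variable {X ι : Type*} {ρ : X → X → Prop}

theorem mem_PX_iff {C : Set X} : C ∈ PX ρ ↔ ∃ f : ρ ↪r ρ, range f = C := by
  constructor
  · rintro ⟨f, hf, hρ, rfl⟩
    exact ⟨⟨⟨f, hf⟩, (hρ _ _).symm⟩, rfl⟩
  · rintro ⟨f, rfl⟩
    exact ⟨f, f.injective, fun _ _ => f.map_rel_iff.symm, rfl⟩

theorem range_mem_PX (f : ρ ↪r ρ) : range f ∈ PX ρ :=
  mem_PX_iff.2 ⟨f, rfl⟩

theorem not_exists_PX_subset_of_disjoint [Nonempty X] {C₁ C₂ : Set X} (h : Disjoint C₁ C₂) :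
    ¬ ∃ D ∈ PX ρ, D ⊆ C₁ ∧ D ⊆ C₂ := by
  rintro ⟨D, hD, hD₁, hD₂⟩
  obtain ⟨d, rfl⟩ := mem_PX_iff.1 hD
  exact (range_nonempty d).ne_empty (disjoint_self.1 (h.mono hD₁ hD₂))

theorem exists_eq_fibers {S : ι → Set X} (hcover : ∀ x, ∃! i, x ∈ S i) :
    ∃ c : X → ι, S = fun i => c ⁻¹' {i} := by
  choose c hc huniq using hcover
  refine ⟨c, funext fun i => Set.ext fun x => ⟨fun hx => (huniq x i hx).symm, ?_⟩⟩
  rintro rfl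
  exact hc x

theorem exists_relEmbedding_comp_eq {c : X → ι} (hc : ∀ a b, ρ a b → c a = c b)
    {φ : ι → ι} (hφ : Injective φ)
    (hemb : ∀ i, ∃ h : X → X, MapsTo h (c ⁻¹' {i}) (c ⁻¹' {φ i}) ∧ InjOn h (c ⁻¹' {i}) ∧
      ∀ a ∈ c ⁻¹' {i}, ∀ b ∈ c ⁻¹' {i}, (ρ a b ↔ ρ (h a) (h b))) :
    ∃ g : ρ ↪r ρ, ∀ x, c (g x) = φ (c x) := by
  choose h hmaps hinj hρ using hemb
  set g : X → X := fun x => h (c x) x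
  have hcg : ∀ x, c (g x) = φ (c x) := fun x => hmaps (c x) rfl
  have hc_eq : ∀ {a b}, c (g a) = c (g b) → c a = c b := fun hab => hφ (by rwa [← hcg, ← hcg])
  have hg_inj : Injective g := by
    intro a b hab
    have hab' : c a = c b := hc_eq (congrArg c hab)
    exact hinj (c a) rfl hab'.symm (by simpa only [g, hab'] using hab)
  have hg_rel : ∀ {a b}, ρ (g a) (g b) ↔ ρ a b := by
    intro a b
    constructor
    · intro hab
      have hab' : c a = c b := hc_eq (hc _ _ hab)
      simp only [g, ← hab'] at hab
      exact (hρ (c a) a rfl b hab'.symm).2 hab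
    · intro hab
      have hab' : c a = c b := hc _ _ hab
      simpa only [g, ← hab'] using (hρ (c a) a rfl b hab'.symm).1 hab
  exact ⟨⟨⟨g, hg_inj⟩, hg_rel⟩, hcg⟩

theorem Infinite.nonempty_sum_self_equiv [Infinite ι] : Nonempty (ι ⊕ ι ≃ ι) := by
  rw [← Cardinal.eq, Cardinal.mk_sum, Cardinal.lift_id, Cardinal.add_eq_self
    (Cardinal.aleph0_le_mk ι)]

theorem exists_relEmbedding_disjoint_range [Infinite ι] {c : X → ι}
    (hc : ∀ a b, ρ a b → c a = c b)
    (hemb : ∀ i j, ∃ h : X → X, MapsTo h (c ⁻¹' {i}) (c ⁻¹' {j}) ∧ InjOn h (c ⁻¹' {i}) ∧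
      ∀ a ∈ c ⁻¹' {i}, ∀ b ∈ c ⁻¹' {i}, (ρ a b ↔ ρ (h a) (h b))) :
    ∃ g₁ g₂ : ρ ↪r ρ, Disjoint (range g₁) (range g₂) := by
  obtain ⟨e⟩ := Infinite.nonempty_sum_self_equiv (ι := ι)
  obtain ⟨g₁, hg₁⟩ := exists_relEmbedding_comp_eq hc (e.injective.comp Sum.inl_injective)
    fun i => hemb i _
  obtain ⟨g₂, hg₂⟩ := exists_relEmbedding_comp_eq hc (e.injective.comp Sum.inr_injective)
    fun i => hemb i _
  refine ⟨g₁, g₂, Set.disjoint_left.2 ?_⟩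
  rintro _ ⟨x, rfl⟩ ⟨y, hy⟩
  have := congrArg c hy
  rw [hg₁, hg₂] at this
  exact Sum.inr_ne_inl (e.injective this)

end

theorem poset_of_copies_atomless_general {X ι : Type*} [Infinite ι]
    (ρ : X → X → Prop) (S : ι → Set X)
    (hcover : ∀ x : X, ∃! i, x ∈ S i)
    (hne : ∀ i, (S i).Nonempty)
    (hrel : ∀ a b : X, ρ a b → ∃ i, a ∈ S i ∧ b ∈ S i)
    (hiso : ∀ i j, ∃ f : X → X, Set.BijOn f (S i) (S j) ∧
        ∀ a ∈ S i, ∀ b ∈ S i, (ρ a b ↔ ρ (f a) (f b))) :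
    ∀ C ∈ PX ρ, ∃ C₁ ∈ PX ρ, ∃ C₂ ∈ PX ρ, C₁ ⊆ C ∧ C₂ ⊆ C ∧
      ¬ ∃ D ∈ PX ρ, D ⊆ C₁ ∧ D ⊆ C₂ := by
  intro C hC
  obtain ⟨f, rfl⟩ := mem_PX_iff.1 hC
  obtain ⟨c, rfl⟩ := exists_eq_fibers hcover
  have : Nonempty X := (hne (Classical.arbitrary ι)).to_subtype.map Subtype.val
  have hc : ∀ a b, ρ a b → c a = c b := fun a b hab =>
    let ⟨_, ha, hb⟩ := hrel a b hab
    ha.trans hb.symm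
  obtain ⟨g₁, g₂, hdisj⟩ := exists_relEmbedding_disjoint_range hc fun i j =>
    (hiso i j).imp fun _ h => ⟨h.1.mapsTo, h.1.injOn, h.2⟩
  refine ⟨_, range_mem_PX (g₁.trans f), _, range_mem_PX (g₂.trans f),
    RelEmbedding.coe_trans g₁ f ▸ range_comp_subset_range _ _,
    RelEmbedding.coe_trans g₂ f ▸ range_comp_subset_range _ _,
    not_exists_PX_subset_of_disjoint ?_⟩
  simpa only [RelEmbedding.coe_trans, range_comp] using
    (disjoint_image_iff f.injective).2 hdisj

/-- For a disjoint union of infinitely many pairwise isomorphic strongly connected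
structures, the poset of copies ordered by `⊆` is atomless. -/
theorem poset_of_copies_atomless {X ι : Type*} [Infinite ι]
    (ρ : X → X → Prop) (S : ι → Set X)
    (hcover : ∀ x : X, ∃! i, x ∈ S i)
    (hne : ∀ i, (S i).Nonempty)
    (hrel : ∀ a b : X, ρ a b → ∃ i, a ∈ S i ∧ b ∈ S i)
    (hsc : ∀ i, StronglyConnectedOn ρ (S i))
    (hiso : ∀ i j, ∃ f : X → X, Set.BijOn f (S i) (S j) ∧
        ∀ a ∈ S i, ∀ b ∈ S i, (ρ a b ↔ ρ (f a) (f b))) :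
    ∀ C ∈ PX ρ, ∃ C₁ ∈ PX ρ, ∃ C₂ ∈ PX ρ, C₁ ⊆ C ∧ C₂ ⊆ C ∧
      ¬ ∃ D ∈ PX ρ, D ⊆ C₁ ∧ D ⊆ C₂ :=
  poset_of_copies_atomless_general ρ S hcover hne hrel hiso
end

section
/- The binary tree ⟨2^{<ω}, ⊂⟩ of finite binary sequences ordered by strict extension is connected but not strongly connected. -/
/-! Every sequence extends the empty one, so the tree is connected through its root. But the
two cones `0 ⌢ 2^{<ω}` and `1 ⌢ 2^{<ω}` are copies of the whole tree, and sequences from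
different cones are distinct and incomparable. -/

section CopiesIn

variable {X : Type*} {ρ : X → X → Prop}

theorem range_mem_copiesIn_univ {f : X → X} (hf : Function.Injective f)
    (hρ : ∀ a b, ρ a b ↔ ρ (f a) (f b)) : Set.range f ∈ copiesIn ρ Set.univ :=
  ⟨Set.subset_univ _, f, Set.image_univ ▸ hf.injOn.bijOn_image, fun a _ b _ => hρ a b⟩

end CopiesIn

namespace List

variable {α : Type*}

theorem eqvGen_strictPrefix_nil (s : List α) :
    Relation.EqvGen (fun s t : List α => s <+: t ∧ s ≠ t) [] s := by
  rcases eq_or_ne [] s with rfl | h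
  · exact .refl _
  · exact .rel _ _ ⟨nil_prefix, h⟩

theorem eqvGen_strictPrefix (s t : List α) :
    Relation.EqvGen (fun s t : List α => s <+: t ∧ s ≠ t) s t :=
  .trans _ _ _ (.symm _ _ (eqvGen_strictPrefix_nil s)) (eqvGen_strictPrefix_nil t)

theorem range_cons_mem_copiesIn_strictPrefix (c : α) :
    Set.range (cons c) ∈ copiesIn (fun s t : List α => s <+: t ∧ s ≠ t) Set.univ :=
  range_mem_copiesIn_univ cons_injective fun a b => by
    simp only [prefix_cons_inj, ne_eq, cons.injEq, true_and]

theorem not_prefix_cons_of_ne {a b : α} (hab : a ≠ b) (s t : List α) :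
    ¬ a :: s <+: b :: t :=
  fun h => hab (cons_prefix_cons.mp h).1

end List

/-- The binary tree `⟨2^{<ω}, ⊂⟩` is connected but not strongly connected. -/
theorem binaryTree_connected_not_stronglyConnected :
    (∀ s t : List Bool, Relation.EqvGen (fun s t : List Bool => s <+: t ∧ s ≠ t) s t) ∧
    ¬ StronglyConnectedOn (fun s t : List Bool => s <+: t ∧ s ≠ t) Set.univ := by
  refine ⟨List.eqvGen_strictPrefix, fun ⟨_, hcopies⟩ => ?_⟩
  obtain ⟨_, ⟨s, rfl⟩, _, ⟨t, rfl⟩, hrel⟩ :=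
    hcopies _ (List.range_cons_mem_copiesIn_strictPrefix true)
      _ (List.range_cons_mem_copiesIn_strictPrefix false)
  rcases hrel with heq | ⟨hst, -⟩ | ⟨hts, -⟩
  · exact Bool.false_ne_true.symm (List.cons.inj heq).1
  · exact List.not_prefix_cons_of_ne Bool.false_ne_true.symm s t hst
  · exact List.not_prefix_cons_of_ne Bool.false_ne_true t s hts
end
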